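/- arXiv:1610.06501 — 3 statements merged into one kernel-verified Lean document; each statement's English description precedes it below -/
import Mathlib

section
/- Fix d ≥ 1, x with λ_j(x) > 0 for all j, and α ∈ ℝ^d. Define for vectors b, h ∈ (0,∞)^d the payoff K(b,h) = Σ_{j=1}^d [2 λ_j(x) l(h_j/λ_j(x)) - b_j l(h_j/b_j) + h_j α_j], where l(u) = u log u - u + 1. Then the pair b* = h* with b*_j = h*_j = λ_j(x) e^{-α_j/2} is a saddle point: K(b, h*) ≤ K(b*, h*) ≤ K(b*, h) for all b, h ∈ (0,∞)^d, and the saddle value equals K(b*,h*) = -2 H(x, -α/2) = -2 Σ_j λ_j(x)(e^{-α_j/2} - 1). -/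
/-!
Write `b l(h/b) = h log(h/b) + b - h`, with `l = klFun ≥ 0`. Since `b l(h/b)` vanishes at `b = h`,
moving `b` away from `h*` only subtracts the nonnegative term `b_j l(h*_j/b_j)`. For `b = b*`,
`log(h/λ) + α/2 = log(h/b*)`, and the summand collapses to `b*_j l(h_j/b*_j) + 2λ_j - 2b*_j`,
which is minimal at `h = b*`.
-/

open Real InformationTheory

lemma mul_klFun_div {a b : ℝ} (hb : b ≠ 0) : b * klFun (a / b) = a * log (a / b) + b - a := by
  rw [klFun_apply]
  field_simp

lemma mul_klFun_div_self (c : ℝ) : c * klFun (c / c) = 0 := by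
  rcases eq_or_ne c 0 with rfl | hc
  · exact zero_mul _
  · rw [div_self hc, klFun_one, mul_zero]

lemma mul_klFun_div_nonneg {a b : ℝ} (ha : 0 ≤ a) (hb : 0 ≤ b) : 0 ≤ b * klFun (a / b) :=
  mul_nonneg hb (klFun_nonneg (div_nonneg ha hb))

noncomputable def saddlePayoff (lam a b g : ℝ) : ℝ :=
  2 * lam * klFun (g / lam) - b * klFun (g / b) + g * a

section saddlePayoff

variable {lam a b g : ℝ}

lemma saddlePayoff_le_saddlePayoff_self {c : ℝ} (hb : 0 ≤ b) (hc : 0 ≤ c) :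
    saddlePayoff lam a b c ≤ saddlePayoff lam a c c := by
  have := mul_klFun_div_nonneg hc hb
  unfold saddlePayoff
  linarith [mul_klFun_div_self c]

lemma saddlePayoff_optimal_self (hlam : lam ≠ 0) :
    saddlePayoff lam a (lam * exp (-a / 2)) (lam * exp (-a / 2)) =
      -2 * (lam * (exp (-a / 2) - 1)) := by
  have hratio : lam * exp (-a / 2) / lam = exp (-a / 2) := by field_simp
  rw [saddlePayoff, mul_klFun_div_self, hratio, klFun_apply, log_exp]
  ring

lemma saddlePayoff_optimal (hlam : lam ≠ 0) (hg : g ≠ 0) :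
    saddlePayoff lam a (lam * exp (-a / 2)) g =
      saddlePayoff lam a (lam * exp (-a / 2)) (lam * exp (-a / 2)) +
        lam * exp (-a / 2) * klFun (g / (lam * exp (-a / 2))) := by
  have hbstar : lam * exp (-a / 2) ≠ 0 := mul_ne_zero hlam (exp_pos _).ne'
  have hlog : log (g / (lam * exp (-a / 2))) = log (g / lam) + a / 2 := by
    rw [← div_div, log_div (div_ne_zero hg hlam) (exp_pos _).ne', log_exp]
    ring
  rw [saddlePayoff_optimal_self hlam, saddlePayoff, mul_assoc, mul_klFun_div hlam,
    mul_klFun_div hbstar, hlog]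
  ring

lemma saddlePayoff_optimal_le (hlam : 0 < lam) (hg : 0 < g) :
    saddlePayoff lam a (lam * exp (-a / 2)) (lam * exp (-a / 2)) ≤
      saddlePayoff lam a (lam * exp (-a / 2)) g := by
  rw [saddlePayoff_optimal hlam.ne' hg.ne']
  have := mul_klFun_div_nonneg hg.le (mul_pos hlam (exp_pos (-a / 2))).le
  linarith

end saddlePayoff

theorem stmt5_general (d : ℕ) (lam : Fin d → ℝ) (hlam : ∀ j, 0 < lam j)
    (α : Fin d → ℝ)
    (l : ℝ → ℝ) (hl : ∀ u : ℝ, l u = u * Real.log u - u + 1)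
    (K : (Fin d → ℝ) → (Fin d → ℝ) → ℝ)
    (hK : ∀ b g : Fin d → ℝ, K b g =
      ∑ j, (2 * lam j * l (g j / lam j) - b j * l (g j / b j) + g j * α j))
    (bstar : Fin d → ℝ) (hbstar : ∀ j, bstar j = lam j * Real.exp (-(α j) / 2)) :
    (∀ b : Fin d → ℝ, (∀ j, 0 < b j) → K b bstar ≤ K bstar bstar) ∧
    (∀ g : Fin d → ℝ, (∀ j, 0 < g j) → K bstar bstar ≤ K bstar g) ∧
    K bstar bstar = -2 * ∑ j, lam j * (Real.exp (-(α j) / 2) - 1) := by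
  obtain rfl : l = klFun := funext fun u => by rw [hl, klFun_apply]; ring
  obtain rfl : bstar = fun j => lam j * exp (-α j / 2) := funext hbstar
  have hK' : ∀ b g, K b g = ∑ j, saddlePayoff (lam j) (α j) (b j) (g j) := hK
  refine ⟨fun b hb => ?_, fun g hg => ?_, ?_⟩
  · rw [hK', hK']
    exact Finset.sum_le_sum fun j _ =>
      saddlePayoff_le_saddlePayoff_self (hb j).le (mul_pos (hlam j) (exp_pos _)).le
  · rw [hK', hK']
    exact Finset.sum_le_sum fun j _ => saddlePayoff_optimal_le (hlam j) (hg j)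
  · rw [hK', Finset.mul_sum]
    exact Finset.sum_congr rfl fun j _ => saddlePayoff_optimal_self (hlam j).ne'

/-- Prop. 6.2 of Dupuis–Wang–Leder adapted: the pair
`b* = h* = (λ_j(x) e^{-α_j/2})_j` is a saddle point of
`K(b,h) = ∑_j [2λ_j l(h_j/λ_j) - b_j l(h_j/b_j) + h_j α_j]` over coordinatewise
positive `b, h`, with saddle value `-2H(x,-α/2) = -2∑_j λ_j(x)(e^{-α_j/2}-1)`. -/
theorem stmt5 (d : ℕ) (hd : 1 ≤ d) (lam : Fin d → ℝ) (hlam : ∀ j, 0 < lam j)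
    (α : Fin d → ℝ)
    (l : ℝ → ℝ) (hl : ∀ u : ℝ, l u = u * Real.log u - u + 1)
    (K : (Fin d → ℝ) → (Fin d → ℝ) → ℝ)
    (hK : ∀ b g : Fin d → ℝ, K b g =
      ∑ j, (2 * lam j * l (g j / lam j) - b j * l (g j / b j) + g j * α j))
    (bstar : Fin d → ℝ) (hbstar : ∀ j, bstar j = lam j * Real.exp (-(α j) / 2)) :
    (∀ b : Fin d → ℝ, (∀ j, 0 < b j) → K b bstar ≤ K bstar bstar) ∧
    (∀ g : Fin d → ℝ, (∀ j, 0 < g j) → K bstar bstar ≤ K bstar g) ∧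
    K bstar bstar = -2 * ∑ j, lam j * (Real.exp (-(α j) / 2) - 1) :=
  stmt5_general d lam hlam α l hl K hK bstar hbstar
end

section
/- In dimension d = 1 with λ : [0,z] → (0,∞) continuous, let c > -min_{y∈[0,z]} λ(y) and define A(x;c) = ∫_0^x log(1 + c/λ(y)) dy and W̄(t,x) = 2A(z;c) - 2A(x;c) - 2c(T-t) for (t,x) ∈ [0,T]×[0,z]. Then W̄ is a classical subsolution of the Isaacs equation: W̄_t(t,x) - 2H(x, -DW̄(t,x)/2) = 0 for all (t,x) ∈ [0,T)×[0,z), and W̄(T,z) = 0 ≤ 0, where H(x,α) = λ(x)(e^α - 1). -/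
open Set

theorem one_add_div_pos_of_neg_lt {a b : ℝ} (hb : 0 < b) (h : -b < a) : 0 < 1 + a / b := by
  rw [one_add_div hb.ne']
  exact div_pos (by linarith) hb

theorem mul_exp_log_one_add_div_sub_one {a b : ℝ} (hb : 0 < b) (h : -b < a) :
    b * (Real.exp (Real.log (1 + a / b)) - 1) = a := by
  rw [Real.exp_log (one_add_div_pos_of_neg_lt hb h)]
  field_simp
  ring

theorem ContinuousOn.hasDerivWithinAt_integral_Icc {E : Type*} [NormedAddCommGroup E]
    [NormedSpace ℝ E] [CompleteSpace E] {f : ℝ → E} {a b x : ℝ} (hf : ContinuousOn f (Icc a b))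
    (hx : x ∈ Icc a b) :
    HasDerivWithinAt (fun u => ∫ y in a..u, f y) (f x) (Icc a b) x := by
  have : Fact (x ∈ Icc a b) := ⟨hx⟩
  have hint : IntervalIntegrable f MeasureTheory.volume a x :=
    (hf.mono (uIcc_of_le hx.1 ▸ Icc_subset_Icc_right hx.2)).intervalIntegrable
  exact intervalIntegral.integral_hasDerivWithinAt_right hint
    (hf.stronglyMeasurableAtFilter_nhdsWithin measurableSet_Icc x) (hf x hx)

theorem stmt7_general (z T : ℝ)
    (lam : ℝ → ℝ) (hcont : ContinuousOn lam (Set.Icc 0 z))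
    (hpos : ∀ y ∈ Set.Icc 0 z, 0 < lam y)
    (m : ℝ) (hm : IsLeast (lam '' Set.Icc 0 z) m)
    (c : ℝ) (hc : -m < c)
    (A : ℝ → ℝ) (hA : ∀ x, A x = ∫ y in (0:ℝ)..x, Real.log (1 + c / lam y))
    (W : ℝ → ℝ → ℝ)
    (hW : ∀ t x, W t x = 2 * A z - 2 * A x - 2 * c * (T - t)) :
    (∀ t ∈ Set.Ico 0 T, ∀ x ∈ Set.Ico 0 z,
      HasDerivAt (fun s => W s x) (2 * c) t ∧
      HasDerivWithinAt (fun y => W t y) (-2 * Real.log (1 + c / lam x)) (Set.Icc 0 z) x ∧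
      2 * c - 2 * (lam x * (Real.exp (-(-2 * Real.log (1 + c / lam x)) / 2) - 1)) = 0) ∧
    W T z = 0 := by
  obtain rfl : A = _ := funext hA
  obtain rfl : W = _ := funext fun t => funext (hW t)
  have hc_lt : ∀ y ∈ Icc 0 z, -lam y < c := fun y hy => by
    linarith [hm.2 (mem_image_of_mem lam hy)]
  have hlog : ContinuousOn (fun y => Real.log (1 + c / lam y)) (Icc 0 z) :=
    (continuousOn_const.add (continuousOn_const.div hcont fun y hy => (hpos y hy).ne')).log
      fun y hy => (one_add_div_pos_of_neg_lt (hpos y hy) (hc_lt y hy)).ne'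
  refine ⟨fun t _ x hx => ?_, by ring⟩
  have hx' : x ∈ Icc 0 z := Ico_subset_Icc_self hx
  refine ⟨?_, ?_, ?_⟩
  · simpa using ((hasDerivAt_id t).const_sub T |>.const_mul (2 * c)).const_sub _
  · exact (((hlog.hasDerivWithinAt_integral_Icc hx').const_mul 2).const_sub _ |>.sub_const _)
      |>.congr_deriv (by ring)
  · rw [show -(-2 * Real.log (1 + c / lam x)) / 2 = Real.log (1 + c / lam x) by ring,
      mul_exp_log_one_add_div_sub_one (hpos x hx') (hc_lt x hx'), sub_self]

/-- For `d = 1`, `A(x;c) = ∫_0^x log(1 + c/λ(y)) dy` and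
`W̄(t,x) = 2A(z;c) - 2A(x;c) - 2c(T-t)`, the function `W̄` is a classical subsolution of
the Isaacs equation: its time derivative is `2c`, its spatial derivative (within `[0,z]`)
is `-2log(1+c/λ(x))`, and `W̄_t - 2H(x,-W̄_x/2) = 0` on `[0,T)×[0,z)`, with `W̄(T,z) = 0`.
Here `H(x,α) = λ(x)(e^α - 1)`. -/
theorem stmt7 (z T : ℝ) (hz0 : 0 < z) (hz1 : z < 1) (hT : 0 < T)
    (lam : ℝ → ℝ) (hcont : ContinuousOn lam (Set.Icc 0 z))
    (hpos : ∀ y ∈ Set.Icc 0 z, 0 < lam y)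
    (m : ℝ) (hm : IsLeast (lam '' Set.Icc 0 z) m)
    (c : ℝ) (hc : -m < c)
    (A : ℝ → ℝ) (hA : ∀ x, A x = ∫ y in (0:ℝ)..x, Real.log (1 + c / lam y))
    (W : ℝ → ℝ → ℝ)
    (hW : ∀ t x, W t x = 2 * A z - 2 * A x - 2 * c * (T - t)) :
    (∀ t ∈ Set.Ico 0 T, ∀ x ∈ Set.Ico 0 z,
      HasDerivAt (fun s => W s x) (2 * c) t ∧
      HasDerivWithinAt (fun y => W t y) (-2 * Real.log (1 + c / lam x)) (Set.Icc 0 z) x ∧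
      2 * c - 2 * (lam x * (Real.exp (-(-2 * Real.log (1 + c / lam x)) / 2) - 1)) = 0) ∧
    W T z = 0 :=
  stmt7_general z T lam hcont hpos m hm c hc A hA W hW
end

section
/- In d = 1, let λ : [0,z] → (0,∞) be continuous, T > 0, and suppose c* > -min λ solves ∫_0^z dy/(λ(y)+c*) = T. Define the path ψ : [0,T] → [0,z] implicitly by ∫_0^{ψ(t)} dy/(λ(y)+c*) = t. Then ψ is well-defined, absolutely continuous, strictly increasing, ψ(0) = 0, ψ(T) = z, ψ'(t) = λ(ψ(t)) + c* almost everywhere, and its cost satisfies ∫_0^T L(ψ(t), ψ'(t)) dt = ∫_0^z log(1 + c*/λ(y)) dy - c* T, where L(x,β) = β log(β/λ(x)) - β + λ(x). -/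
open Set Filter intervalIntegral


/-- In `d = 1`, with `λ` continuous and positive on `[0,z]`, `c*` with
`λ + c* > 0` on `[0,z]` and `∫_0^z (λ(y)+c*)⁻¹ dy = T`, the path `ψ` defined implicitly
by `∫_0^{ψ(t)} (λ(y)+c*)⁻¹ dy = t` exists and is unique on `[0,T]`, is strictly
increasing with `ψ(0) = 0`, `ψ(T) = z`, has derivative `ψ'(t) = λ(ψ(t)) + c*`, and its
cost satisfies `∫_0^T L(ψ(t), ψ'(t)) dt = ∫_0^z log(1 + c*/λ(y)) dy - c* T`, where
`L(x,β) = β log(β/λ(x)) - β + λ(x)`. -/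
theorem stmt16 (z T : ℝ) (hz0 : 0 < z) (hz1 : z < 1) (hT : 0 < T)
    (lam : ℝ → ℝ) (hcont : ContinuousOn lam (Set.Icc 0 z))
    (hpos : ∀ y ∈ Set.Icc 0 z, 0 < lam y)
    (cstar : ℝ) (hcs : ∀ y ∈ Set.Icc 0 z, 0 < lam y + cstar)
    (hint : (∫ y in (0:ℝ)..z, (lam y + cstar)⁻¹) = T)
    (L : ℝ → ℝ → ℝ)
    (hL : ∀ x β, L x β = β * Real.log (β / lam x) - β + lam x) :
    ∃ ψ : ℝ → ℝ,
      (∀ t ∈ Set.Icc 0 T, ψ t ∈ Set.Icc 0 z ∧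
        (∫ y in (0:ℝ)..(ψ t), (lam y + cstar)⁻¹) = t) ∧
      (∀ φ : ℝ → ℝ, (∀ t ∈ Set.Icc 0 T, φ t ∈ Set.Icc 0 z ∧
          (∫ y in (0:ℝ)..(φ t), (lam y + cstar)⁻¹) = t) →
        Set.EqOn φ ψ (Set.Icc 0 T)) ∧
      StrictMonoOn ψ (Set.Icc 0 T) ∧ ψ 0 = 0 ∧ ψ T = z ∧
      (∀ t ∈ Set.Icc 0 T,
        HasDerivWithinAt ψ (lam (ψ t) + cstar) (Set.Icc 0 T) t) ∧
      (∫ t in (0:ℝ)..T, L (ψ t) (lam (ψ t) + cstar))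
        = (∫ y in (0:ℝ)..z, Real.log (1 + cstar / lam y)) - cstar * T := by
  -- clamp to [0,z]
  set cl : ℝ → ℝ := fun y => min z (max 0 y) with hcl_def
  have hclmem : ∀ y, cl y ∈ Icc 0 z := fun y =>
    ⟨le_min hz0.le (le_max_left 0 y), min_le_left _ _⟩
  have hclid : ∀ y ∈ Icc 0 z, cl y = y := by
    intro y hy
    simp only [hcl_def, max_eq_right hy.1, min_eq_right hy.2]
  have hclcont : Continuous cl := continuous_const.min (continuous_const.max continuous_id)
  -- extended lambda
  set lamE : ℝ → ℝ := fun y => lam (cl y) with hlamE_def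
  have hlamEcont : Continuous lamE := hcont.comp_continuous hclcont hclmem
  have hlamEpos : ∀ y, 0 < lamE y := fun y => hpos _ (hclmem y)
  have hEc : ∀ y, 0 < lamE y + cstar := fun y => hcs _ (hclmem y)
  have hlamEeq : ∀ y ∈ Icc 0 z, lamE y = lam y := fun y hy => by
    simp only [hlamE_def, hclid y hy]
  -- the integrand
  set h : ℝ → ℝ := fun y => (lamE y + cstar)⁻¹ with hh_def
  have hhcont : Continuous h := (hlamEcont.add continuous_const).inv₀ fun y => (hEc y).ne'
  have hhpos : ∀ y, 0 < h y := fun y => inv_pos.2 (hEc y)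
  set G : ℝ → ℝ := fun x => ∫ y in (0:ℝ)..x, h y with hG_def
  have hGderiv : ∀ x, HasDerivAt G (h x) x := fun x =>
    (hhcont.integral_hasStrictDerivAt 0 x).hasDerivAt
  have hGcont : Continuous G :=
    Differentiable.continuous fun x => (hGderiv x).differentiableAt
  have hGmono : StrictMono G := by
    apply strictMono_of_deriv_pos
    intro x
    rw [(hGderiv x).deriv]
    exact hhpos x
  have hG0 : G 0 = 0 := integral_same
  -- G agrees with the original primitive on [0,z]
  have hFeq : ∀ x ∈ Icc 0 z, (∫ y in (0:ℝ)..x, (lam y + cstar)⁻¹) = G x := by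
    intro x hx
    apply intervalIntegral.integral_congr
    intro y hy
    have hy' : y ∈ Icc 0 z := by
      rw [uIcc_of_le hx.1] at hy
      exact ⟨hy.1, hy.2.trans hx.2⟩
    simp only [hh_def, hlamEeq y hy']
  have hGz : G z = T := by rw [← hFeq z ⟨hz0.le, le_refl z⟩, hint]
  -- explicit tails
  have hup : ∀ x, z ≤ x → G x = T + (x - z) * (lam z + cstar)⁻¹ := by
    intro x hx
    have hadj : G z + (∫ y in z..x, h y) = G x :=
      intervalIntegral.integral_add_adjacent_intervals
        (hhcont.intervalIntegrable 0 z) (hhcont.intervalIntegrable z x)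
    have hconst : (∫ y in z..x, h y) = (x - z) * (lam z + cstar)⁻¹ := by
      rw [intervalIntegral.integral_congr (g := fun _ => (lam z + cstar)⁻¹) ?_,
        intervalIntegral.integral_const, smul_eq_mul]
      intro y hy
      have hy' : z ≤ y := by
        rw [uIcc_of_le hx] at hy; exact hy.1
      have : cl y = z := by
        simp only [hcl_def]
        rw [max_eq_right (hz0.le.trans hy'), min_eq_left hy']
      simp only [hh_def, hlamE_def, this]
    rw [← hadj, hGz, hconst]
  have hlow : ∀ x, x ≤ 0 → G x = x * (lam 0 + cstar)⁻¹ := by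
    intro x hx
    have hconst : G x = (x - 0) * (lam 0 + cstar)⁻¹ := by
      show (∫ y in (0:ℝ)..x, h y) = (x - 0) * (lam 0 + cstar)⁻¹
      rw [intervalIntegral.integral_congr (g := fun _ => (lam 0 + cstar)⁻¹) ?_,
        intervalIntegral.integral_const, smul_eq_mul]
      intro y hy
      have hy' : y ≤ 0 := by
        rw [uIcc_of_ge hx] at hy; exact hy.2
      have : cl y = 0 := by
        simp only [hcl_def]
        rw [max_eq_left hy', min_eq_right hz0.le]
      simp only [hh_def, hlamE_def, this]
    simpa using hconst
  -- surjectivity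
  have htop : Tendsto G atTop atTop := by
    apply Tendsto.congr' (f₁ := fun x => T + (x - z) * (lam z + cstar)⁻¹)
    · filter_upwards [eventually_ge_atTop z] with x hx
      exact (hup x hx).symm
    · apply tendsto_atTop_add_const_left
      apply Tendsto.atTop_mul_const (inv_pos.2 (hcs z ⟨hz0.le, le_refl z⟩))
      exact tendsto_atTop_add_const_right _ _ tendsto_id
  have hbot : Tendsto G atBot atBot := by
    apply Tendsto.congr' (f₁ := fun x => x * (lam 0 + cstar)⁻¹)
    · filter_upwards [eventually_le_atBot (0:ℝ)] with x hx
      exact (hlow x hx).symm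
    · exact Tendsto.atBot_mul_const (inv_pos.2 (hcs 0 ⟨le_refl 0, hz0.le⟩)) tendsto_id
  have hGsurj : Function.Surjective G := hGcont.surjective htop hbot
  -- the inverse
  set e : ℝ ≃o ℝ := StrictMono.orderIsoOfSurjective G hGmono hGsurj with he_def
  set ψ : ℝ → ℝ := fun t => e.symm t with hψ_def
  have hGψ : ∀ t, G (ψ t) = t := fun t =>
    StrictMono.orderIsoOfSurjective_self_symm_apply G hGmono hGsurj t
  have hψG : ∀ x, ψ (G x) = x := fun x =>
    StrictMono.orderIsoOfSurjective_symm_apply_self G hGmono hGsurj x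
  have hψmono : StrictMono ψ := e.symm.strictMono
  have hψcont : Continuous ψ := e.symm.continuous
  have hψ0 : ψ 0 = 0 := by have := hψG 0; rwa [hG0] at this
  have hψT : ψ T = z := by have := hψG z; rwa [hGz] at this
  have hmem : ∀ t ∈ Icc 0 T, ψ t ∈ Icc 0 z := by
    intro t ht
    constructor
    · rw [← hψ0]; exact hψmono.monotone ht.1
    · rw [← hψT]; exact hψmono.monotone ht.2
  have hprop : ∀ t ∈ Icc 0 T, ψ t ∈ Icc 0 z ∧
      (∫ y in (0:ℝ)..(ψ t), (lam y + cstar)⁻¹) = t := by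
    intro t ht
    exact ⟨hmem t ht, by rw [hFeq _ (hmem t ht)]; exact hGψ t⟩
  -- derivatives
  have hderiv : ∀ t ∈ Icc 0 T, HasDerivAt ψ (lam (ψ t) + cstar) t := by
    intro t ht
    have key : HasDerivAt ψ (h (ψ t))⁻¹ t :=
      HasDerivAt.of_local_left_inverse hψcont.continuousAt (hGderiv (ψ t))
        (hhpos (ψ t)).ne' (Eventually.of_forall hGψ)
    have : (h (ψ t))⁻¹ = lam (ψ t) + cstar := by
      rw [hh_def]; simp only [inv_inv]
      exact congrArg (· + cstar) (hlamEeq _ (hmem t ht))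
    rwa [this] at key
  refine ⟨ψ, hprop, ?_, fun s hs t ht hst => hψmono hst, hψ0, hψT, ?_, ?_⟩
  · -- uniqueness
    intro φ hφ t ht
    have h1 := hφ t ht
    have h2 := hprop t ht
    have : G (φ t) = G (ψ t) := by
      rw [← hFeq _ h1.1, ← hFeq _ h2.1, h1.2, h2.2]
    exact hGmono.injective this
  · exact fun t ht => (hderiv t ht).hasDerivWithinAt
  · -- the cost computation
    set g : ℝ → ℝ := fun y => Real.log (1 + cstar / lamE y) with hg_def
    have hgcont : Continuous g := by
      apply Continuous.log
      · exact continuous_const.add (continuous_const.div hlamEcont fun y => (hlamEpos y).ne')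
      · intro y
        have : 1 + cstar / lamE y = (lamE y + cstar) / lamE y := by
          rw [add_div, div_self (hlamEpos y).ne']
        rw [this]
        exact (div_pos (hEc y) (hlamEpos y)).ne'
    have hsub : (∫ t in (0:ℝ)..T, (lamE (ψ t) + cstar) • (g ∘ ψ) t)
        = ∫ y in (0:ℝ)..z, g y := by
      have := intervalIntegral.integral_comp_smul_deriv
        (f := ψ) (f' := fun t => lamE (ψ t) + cstar) (g := g) (a := 0) (b := T)
        ?_ ?_ hgcont
      · rw [hψ0, hψT] at this; exact this
      · intro t ht
        have ht' : t ∈ Icc 0 T := by rwa [uIcc_of_le hT.le] at ht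
        have := hderiv t ht'
        rwa [← hlamEeq _ (hmem t ht')] at this
      · exact ((hlamEcont.comp hψcont).add continuous_const).continuousOn
    have hptwise : ∀ t ∈ Icc 0 T,
        L (ψ t) (lam (ψ t) + cstar) = (lamE (ψ t) + cstar) • (g ∘ ψ) t - cstar := by
      intro t ht
      have hm := hmem t ht
      have hlp : (0:ℝ) < lam (ψ t) := hpos _ hm
      rw [hL, smul_eq_mul, Function.comp_apply, hg_def]
      simp only [hlamEeq _ hm]
      have harg : (lam (ψ t) + cstar) / lam (ψ t) = 1 + cstar / lam (ψ t) := by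
        rw [add_div, div_self hlp.ne']
      rw [harg]
      ring
    calc (∫ t in (0:ℝ)..T, L (ψ t) (lam (ψ t) + cstar))
        = ∫ t in (0:ℝ)..T, ((lamE (ψ t) + cstar) • (g ∘ ψ) t - cstar) := by
          apply intervalIntegral.integral_congr
          intro t ht
          rw [uIcc_of_le hT.le] at ht
          exact hptwise t ht
      _ = (∫ t in (0:ℝ)..T, (lamE (ψ t) + cstar) • (g ∘ ψ) t)
            - ∫ t in (0:ℝ)..T, (cstar : ℝ) := by
          apply intervalIntegral.integral_sub
          · apply Continuous.intervalIntegrable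
            exact ((hlamEcont.comp hψcont).add continuous_const).smul (hgcont.comp hψcont)
          · exact intervalIntegrable_const
      _ = (∫ y in (0:ℝ)..z, g y) - cstar * T := by
          rw [hsub, intervalIntegral.integral_const, smul_eq_mul, sub_zero, mul_comm]
      _ = (∫ y in (0:ℝ)..z, Real.log (1 + cstar / lam y)) - cstar * T := by
          congr 1
          apply intervalIntegral.integral_congr
          intro y hy
          rw [uIcc_of_le hz0.le] at hy
          rw [hg_def]
          simp only [hlamEeq y hy]
end
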